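/- arXiv:1310.5191 — 3 statements merged into one kernel-verified Lean document; each statement's English description precedes it below -/
import Mathlib

section
/- For all integers s ≥ 0: p_{4s+2,2}(q) = q^{2s(s+1)} and p_{4s,2}(q) = 0 in ℤ[q]. Equivalently, the generating series P₂(q,u) = Σ_{s≥0} p_{2s,2}(q)u^s equals uΘ(q²,q²u²), where Θ(q,u) = Σ_{s≥0} q^{s²}u^s is the partial theta series. -/
open scoped PowerSeries

/-- The polynomials `p_{s,r}(q) ∈ ℤ[q]` (the graded multiplicities
`[D(2,sω) : D(3,rω)]_q`): `p_{0,0} = p_{1,1} = p_{2,2} = 1`; `p_{s,r} = 0` whenever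
`r > s`, or `s - r` is odd, or `s ≤ 2` and `(s,r) ∉ {(0,0),(1,1),(2,2)}`; and for
`s ≥ 3` with `r ≤ s` and `s - r` even, writing `s = 2s₁ + s₀` with `s₀ ∈ {0,1}`,
`p_{s,r} = q^{(s-r)/2} p_{s-3,r-3} + q^{(s₁+s₀-1)(2-s₀)} p_{s-4+2s₀,r}` if `r ≥ 3`, and
`p_{s,r} = q^{(s₁+s₀-1)(2-s₀)} p_{s-4+2s₀,r}` if `0 ≤ r ≤ 2`. -/
noncomputable def pp : ℕ → ℕ → Polynomial ℤ
  | 0, r => if r = 0 then 1 else 0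
  | 1, r => if r = 1 then 1 else 0
  | 2, r => if r = 2 then 1 else 0
  | (s + 3), r =>
    if (s + 3) < r ∨ (s + 3) % 2 ≠ r % 2 then 0
    else
      (if 3 ≤ r then Polynomial.X ^ (((s + 3) - r) / 2) * pp s (r - 3) else 0)
        + Polynomial.X ^ (((s + 3) / 2 + (s + 3) % 2 - 1) * (2 - (s + 3) % 2))
            * pp ((s + 3) + 2 * ((s + 3) % 2) - 4) r
  termination_by s _ => s
  decreasing_by
  · omega
  · omega

/-- The generating series `P_m(q,u)`: for `m` even, `P_m(q,u) = Σ_{s≥0} p_{2s,m} u^s`;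
for `m` odd, `P_m(q,u) = Σ_{s≥0} p_{2s+1,m} u^{s+1}`.  A formal power series in `u` with
coefficients in `ℤ[q]`. -/
noncomputable def Pser (m : ℕ) : PowerSeries (Polynomial ℤ) :=
  PowerSeries.mk fun n =>
    if m % 2 = 0 then pp (2 * n) m else if n = 0 then 0 else pp (2 * n - 1) m

/-- `thetaSubst a c` is the substituted partial theta series `Θ(a, c·u²) ∈ ℤ[q]⟦u⟧`,
i.e. `Σ_{s≥0} a^{s²} c^s u^{2s}`, where `Θ(q,u) = Σ_{s≥0} q^{s²}u^s`. -/
noncomputable def thetaSubst (a c : Polynomial ℤ) : PowerSeries (Polynomial ℤ) :=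
  PowerSeries.mk fun n => if n % 2 = 0 then a ^ ((n / 2) ^ 2) * c ^ (n / 2) else 0

lemma pp_step (k : ℕ) : pp (2*k+4) 2 = Polynomial.X ^ (2*k+2) * pp (2*k) 2 := by
  show pp (2*k+1+3) 2 = _
  rw [pp]
  have hm : (2*k+1+3) % 2 = 0 := by omega
  have h2 : ¬ (2*k+1+3 < 2 ∨ (2*k+1+3) % 2 ≠ 2 % 2) := by omega
  have e1 : ((2*k+1+3)/2 + (2*k+1+3)%2 - 1) * (2 - (2*k+1+3)%2) = 2*k+2 := by
    rw [hm]; omega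
  have e2 : 2*k+1+3 + 2*((2*k+1+3)%2) - 4 = 2*k := by omega
  rw [if_neg h2, if_neg (by norm_num : ¬ (3:ℕ) ≤ 2), zero_add, e1, e2]

lemma pp42 (s : ℕ) : pp (4 * s + 2) 2 = Polynomial.X ^ (2 * s * (s + 1)) := by
  induction s with
  | zero => simp [pp]
  | succ n ih =>
    have : 4 * (n+1) + 2 = 2 * (2*n+1) + 4 := by omega
    rw [this, pp_step]
    have : 4 * n + 2 = 2 * (2*n+1) := by omega
    rw [← this, ih, ← pow_add]
    congr 1; ring

lemma pp40 (s : ℕ) : pp (4 * s) 2 = 0 := by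
  induction s with
  | zero => simp [pp]
  | succ n ih =>
    have : 4 * (n+1) = 2 * (2*n) + 4 := by omega
    rw [this, pp_step]
    have : 4 * n = 2 * (2*n) := by omega
    rw [← this, ih, mul_zero]

/-- For all integers `s ≥ 0`: `p_{4s+2,2}(q) = q^{2s(s+1)}` and
`p_{4s,2}(q) = 0` in `ℤ[q]`.  Equivalently, the generating series
`P₂(q,u) = Σ_{s≥0} p_{2s,2}(q)u^s` equals `u·Θ(q², q²u²)`, where
`Θ(q,u) = Σ_{s≥0} q^{s²}u^s` is the partial theta series. -/
theorem stmt12 :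
    (∀ s : ℕ, pp (4 * s + 2) 2 = Polynomial.X ^ (2 * s * (s + 1))) ∧
    (∀ s : ℕ, pp (4 * s) 2 = 0) ∧
    Pser 2 = PowerSeries.X * thetaSubst (Polynomial.X ^ 2) (Polynomial.X ^ 2) := by
  refine ⟨pp42, pp40, ?_⟩
  refine PowerSeries.ext fun n => ?_
  cases n with
  | zero =>
    have h0 : pp 0 2 = 0 := by simp [pp]
    simp [Pser, h0]
  | succ n =>
    rw [PowerSeries.coeff_succ_X_mul]
    simp only [Pser, thetaSubst, PowerSeries.coeff_mk]
    norm_num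
    rcases Nat.even_or_odd n with ⟨k, hk⟩ | ⟨k, hk⟩
    · have hn : n % 2 = 0 := by omega
      have hd : n / 2 = k := by omega
      rw [if_pos hn, hd]
      have : 2 * (n + 1) = 4 * k + 2 := by omega
      rw [this, pp42, ← pow_mul, ← pow_mul, ← pow_add]
      congr 1; ring
    · have hn : ¬ n % 2 = 0 := by omega
      rw [if_neg hn]
      have : 2 * (n + 1) = 4 * (k + 1) := by omega
      rw [this, pp40]
end

section
/- For every integer r ≥ 1 one has the identity of formal power series in u over ℤ[q]: q^r·P_{2r+1}(q,u) = qu²·P_{2r-2}(q,qu) + q^r·u·P_{2r+1}(q,qu). -/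
open scoped PowerSeries

/-! Comparing coefficients of `u^(m+2)`, the identity is the defining recursion
`p_{2m+3,2r+1} = q^(m+1-r) p_{2m,2r-2} + q^(m+1) p_{2m+1,2r+1}` multiplied by `q^r`: the factor
`q^r` turns `q^(m+1-r)` into the `q^(m+1)` produced by rescaling `u ↦ qu`. When `m + 1 < r`
all three polynomials vanish. -/

lemma pp_eq_zero_of_lt {s r : ℕ} (h : s < r) : pp s r = 0 := by
  rcases s with _ | _ | _ | s
  · simp [pp]; omega
  · simp [pp]; omega
  · simp [pp]; omega
  · rw [pp, if_pos (Or.inl h)]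

lemma pp_two_mul_add_three {m k : ℕ} (hkm : k ≤ m) :
    pp (2 * m + 3) (2 * k + 3)
      = Polynomial.X ^ (m - k) * pp (2 * m) (2 * k)
          + Polynomial.X ^ (m + 1) * pp (2 * m + 1) (2 * k + 3) := by
  have hodd : (2 * m + 3) % 2 = 1 := by omega
  rw [pp, if_neg (by omega), if_pos (by omega), hodd]
  congr 3 <;> omega

lemma X_pow_mul_pp_two_mul_add_three (k m : ℕ) :
    Polynomial.X ^ (k + 1) * pp (2 * m + 3) (2 * k + 3)
      = Polynomial.X ^ (m + 1) * pp (2 * m) (2 * k)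
          + Polynomial.X ^ (k + 1) * (Polynomial.X ^ (m + 1) * pp (2 * m + 1) (2 * k + 3)) := by
  by_cases hkm : k ≤ m
  · rw [pp_two_mul_add_three hkm, mul_add, ← mul_assoc, ← pow_add]
    congr 3
    omega
  · simp only [pp_eq_zero_of_lt (show 2 * m + 3 < 2 * k + 3 by omega),
      pp_eq_zero_of_lt (show 2 * m < 2 * k by omega),
      pp_eq_zero_of_lt (show 2 * m + 1 < 2 * k + 3 by omega), mul_zero, add_zero]

lemma coeff_Pser_two_mul (r n : ℕ) :
    PowerSeries.coeff n (Pser (2 * r)) = pp (2 * n) (2 * r) := by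
  simp [Pser]

lemma coeff_zero_Pser_two_mul_add_one (r : ℕ) :
    PowerSeries.coeff 0 (Pser (2 * r + 1)) = 0 := by
  simp [Pser]

lemma coeff_succ_Pser_two_mul_add_one (r n : ℕ) :
    PowerSeries.coeff (n + 1) (Pser (2 * r + 1)) = pp (2 * n + 1) (2 * r + 1) := by
  simp [Pser, Nat.mul_succ]

open PowerSeries in
/-- For every integer `r ≥ 1`, in `ℤ[q]⟦u⟧`:
`q^r·P_{2r+1}(q,u) = qu²·P_{2r-2}(q,qu) + q^r·u·P_{2r+1}(q,qu)`, where `P_m(q,cu)` is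
the rescaled series whose `u^s`-coefficient is `c^s` times that of `P_m(q,u)`. -/
theorem stmt14 (r : ℕ) (hr : 1 ≤ r) :
    PowerSeries.C (Polynomial.X : Polynomial ℤ) ^ r * Pser (2 * r + 1)
      = PowerSeries.C (Polynomial.X : Polynomial ℤ) * PowerSeries.X ^ 2
          * PowerSeries.rescale Polynomial.X (Pser (2 * r - 2))
        + PowerSeries.C (Polynomial.X : Polynomial ℤ) ^ r * PowerSeries.X
            * PowerSeries.rescale Polynomial.X (Pser (2 * r + 1)) := by
  obtain ⟨k, rfl⟩ : ∃ k, r = k + 1 := ⟨r - 1, by omega⟩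
  have regroup (f g : (Polynomial ℤ)⟦X⟧) :
      C Polynomial.X * X ^ 2 * f + C (Polynomial.X ^ (k + 1)) * X * g
        = X * (X * (C Polynomial.X * f)) + X * (C (Polynomial.X ^ (k + 1)) * g) := by
    ring
  rw [← map_pow, regroup, show 2 * (k + 1) - 2 = 2 * k by omega]
  refine ext fun n => ?_
  rcases n with _ | _ | m
  · simp only [map_add, coeff_C_mul, coeff_zero_X_mul, coeff_zero_Pser_two_mul_add_one]
    ring
  · simp only [map_add, coeff_C_mul, coeff_succ_X_mul, coeff_zero_X_mul, coeff_rescale,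
      coeff_succ_Pser_two_mul_add_one, coeff_zero_Pser_two_mul_add_one,
      pp_eq_zero_of_lt (show 2 * 0 + 1 < 2 * (k + 1) + 1 by omega)]
    ring
  · simp only [map_add, coeff_C_mul, coeff_succ_X_mul, coeff_rescale,
      coeff_succ_Pser_two_mul_add_one, coeff_Pser_two_mul]
    rw [show 2 * (m + 1) + 1 = 2 * m + 3 by ring, show 2 * (k + 1) + 1 = 2 * k + 3 by ring,
      X_pow_mul_pp_two_mul_add_three]
    ring
end

section
/- For every integer r ≥ 6 one has the identity of formal power series in ℤ[[u]]: (1-u)(1-u²)·P_r(1,u) = u³·P_{r-6}(1,u), where P_m(1,u) is obtained from P_m(q,u) by evaluating each coefficient at q = 1. -/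
/-!
At `q = 1` the recursion for `p_{s,r}` reads `p_{s+3,r} = p_{s,r-3} + p_{s',r}` with `s' = s - 1`
for `s + 3` even and `s' = s + 1` for `s + 3` odd. On generating series this says
`(1 - u²) P_r = u P_{r-3}` for even `r ≥ 3` and `(1 - u) P_r = u² P_{r-3}` for odd `r ≥ 3`,
and applying both steps (in either order, according to the parity of `r`) gives the theorem.
-/

open scoped PowerSeries

/-- `P_m(1,u) ∈ ℤ⟦u⟧`, obtained from `P_m(q,u)` by evaluating each coefficient at
`q = 1`. -/
noncomputable def Pone (m : ℕ) : PowerSeries ℤ :=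
  PowerSeries.map (Polynomial.evalRingHom (1 : ℤ)) (Pser m)

open PowerSeries

lemma pp_eq_zero {s r : ℕ} (h : s < r ∨ s % 2 ≠ r % 2) : pp s r = 0 := by
  match s with
  | 0 | 1 | 2 => rw [pp, if_neg (by omega)]
  | s + 3 => rw [pp, if_pos h]

lemma eval_one_pp_add_three (s : ℕ) {r : ℕ} (hr : 3 ≤ r) :
    (pp (s + 3) r).eval 1
      = (pp s (r - 3)).eval 1 + (pp (s + 3 + 2 * ((s + 3) % 2) - 4) r).eval 1 := by
  by_cases h : s + 3 < r ∨ (s + 3) % 2 ≠ r % 2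
  · rw [pp_eq_zero h, pp_eq_zero (by omega), pp_eq_zero (by omega)]
    simp
  · rw [pp, if_neg h, if_pos hr]
    simp

lemma eval_one_pp_even_step (k : ℕ) {r : ℕ} (hr : 3 ≤ r) :
    (pp (2 * k + 4) r).eval 1 = (pp (2 * k + 1) (r - 3)).eval 1 + (pp (2 * k) r).eval 1 := by
  have h := eval_one_pp_add_three (2 * k + 1) hr
  rwa [show 2 * k + 1 + 3 + 2 * ((2 * k + 1 + 3) % 2) - 4 = 2 * k by omega] at h

lemma eval_one_pp_odd_step (k : ℕ) {r : ℕ} (hr : 3 ≤ r) :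
    (pp (2 * k + 3) r).eval 1 = (pp (2 * k) (r - 3)).eval 1 + (pp (2 * k + 1) r).eval 1 := by
  have h := eval_one_pp_add_three (2 * k) hr
  rwa [show 2 * k + 3 + 2 * ((2 * k + 3) % 2) - 4 = 2 * k + 1 by omega] at h

lemma coeff_Pone_of_even {r : ℕ} (hr : Even r) (n : ℕ) :
    coeff n (Pone r) = (pp (2 * n) r).eval 1 := by
  rw [Nat.even_iff] at hr
  simp [Pone, Pser, hr]

lemma coeff_zero_Pone_of_odd {r : ℕ} (hr : Odd r) : coeff 0 (Pone r) = 0 := by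
  rw [Nat.odd_iff] at hr
  simp [Pone, Pser, hr]

lemma coeff_succ_Pone_of_odd {r : ℕ} (hr : Odd r) (n : ℕ) :
    coeff (n + 1) (Pone r) = (pp (2 * n + 1) r).eval 1 := by
  rw [Nat.odd_iff] at hr
  simp [Pone, Pser, hr, show 2 * (n + 1) - 1 = 2 * n + 1 by omega]

lemma one_sub_X_sq_mul_Pone_of_even {r : ℕ} (hr : Even r) (h3 : 3 ≤ r) :
    (1 - X ^ 2) * Pone r = X * Pone (r - 3) := by
  have hr' : Odd (r - 3) := Nat.Even.sub_odd h3 hr ⟨1, rfl⟩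
  ext n
  rw [sub_mul, one_mul, map_sub, coeff_X_pow_mul', coeff_Pone_of_even hr]
  match n with
  | 0 => simp [pp_eq_zero (s := 0) (r := r) (by omega)]
  | 1 => simp [pp_eq_zero (s := 2) (r := r) (by omega), coeff_zero_Pone_of_odd hr']
  | k + 2 =>
    rw [coeff_Pone_of_even hr, coeff_succ_X_mul, coeff_succ_Pone_of_odd hr',
      show 2 * (k + 2) = 2 * k + 4 by ring, eval_one_pp_even_step k h3]
    simp

lemma one_sub_X_mul_Pone_of_odd {r : ℕ} (hr : Odd r) (h3 : 3 ≤ r) :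
    (1 - X) * Pone r = X ^ 2 * Pone (r - 3) := by
  have hr' : Even (r - 3) := Nat.Odd.sub_odd hr ⟨1, rfl⟩
  ext n
  rw [sub_mul, one_mul, map_sub, coeff_X_pow_mul']
  match n with
  | 0 => rw [coeff_zero_Pone_of_odd hr]; simp
  | 1 =>
    rw [coeff_succ_X_mul, coeff_succ_Pone_of_odd hr, coeff_zero_Pone_of_odd hr,
      pp_eq_zero (by omega)]
    simp
  | k + 2 =>
    rw [coeff_succ_X_mul, coeff_succ_Pone_of_odd hr, coeff_succ_Pone_of_odd hr,
      coeff_Pone_of_even hr', show 2 * (k + 1) + 1 = 2 * k + 3 by ring,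
      eval_one_pp_odd_step k h3]
    simp

/-- For every integer `r ≥ 6`, in `ℤ⟦u⟧`:
`(1-u)(1-u²)·P_r(1,u) = u³·P_{r-6}(1,u)`. -/
theorem stmt18 (r : ℕ) (hr : 6 ≤ r) :
    (1 - PowerSeries.X) * (1 - PowerSeries.X ^ 2) * Pone r
      = PowerSeries.X ^ 3 * Pone (r - 6) := by
  have hsub : r - 3 - 3 = r - 6 := by omega
  rcases Nat.even_or_odd r with h_even | h_odd
  · have h_odd' : Odd (r - 3) := Nat.Even.sub_odd (by omega) h_even ⟨1, rfl⟩
    calc (1 - X) * (1 - X ^ 2) * Pone r = (1 - X) * (X * Pone (r - 3)) := by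
          rw [mul_assoc, one_sub_X_sq_mul_Pone_of_even h_even (by omega)]
      _ = X * ((1 - X) * Pone (r - 3)) := by ring
      _ = X ^ 3 * Pone (r - 6) := by
          rw [one_sub_X_mul_Pone_of_odd h_odd' (by omega), hsub]; ring
  · have h_even' : Even (r - 3) := Nat.Odd.sub_odd h_odd ⟨1, rfl⟩
    calc (1 - X) * (1 - X ^ 2) * Pone r = (1 - X ^ 2) * (X ^ 2 * Pone (r - 3)) := by
          rw [mul_comm (1 - X), mul_assoc, one_sub_X_mul_Pone_of_odd h_odd (by omega)]
      _ = X ^ 2 * ((1 - X ^ 2) * Pone (r - 3)) := by ring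
      _ = X ^ 3 * Pone (r - 6) := by
          rw [one_sub_X_sq_mul_Pone_of_even h_even' (by omega), hsub]; ring
end
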